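/- arXiv:2304.08617 — 8 statements merged into one kernel-verified Lean document; each statement's English description precedes it below -/
import Mathlib

section
/- Let G be a group such that its center Z(G) is torsion-free (i.e., every non-identity element of Z(G) has infinite order) and such that the quotient G/Z(G) is a torsion group (i.e., for every g ∈ G there exists an integer n ≥ 1 with gⁿ ∈ Z(G)). Then Z(G) ∩ { [a,b] : a, b ∈ G } = {e}; equivalently, the quotient map G → G/Z(G) is a commutant-preserving extension (G is self-CP). -/
/-!
If `z = ⁅a, b⁆` is central, then `⁅aⁿ, b⁆ = zⁿ`. Choosing `n ≥ 1` with `aⁿ` central makes the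
left side trivial, so `zⁿ = 1`, and torsion-freeness of the center forces `z = 1`.
-/

open scoped commutatorElement

theorem commutatorElement_pow_left_of_commute {G : Type*} [Group G] {a b : G}
    (h : Commute a ⁅a, b⁆) (n : ℕ) : ⁅a ^ n, b⁆ = ⁅a, b⁆ ^ n := by
  induction n with
  | zero => simp
  | succ k ih =>
    rw [pow_succ', commutatorElement_mul_left_eq_conj_mul, ih, (h.pow_right k).eq,
      mul_inv_cancel_right, pow_succ]

/-- If `Z(G)` is torsion-free and `G/Z(G)` is a torsion group, then the
center meets the set of commutators only in the identity (i.e. `G` is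
self-CP). -/
theorem center_inter_commutators_of_torsionfree_center {G : Type*} [Group G]
    (htf : ∀ z : G, z ∈ Subgroup.center G → z ≠ 1 →
      ∀ n : ℕ, 0 < n → z ^ n ≠ 1)
    (htor : ∀ g : G, ∃ n : ℕ, 1 ≤ n ∧ g ^ n ∈ Subgroup.center G) :
    (Subgroup.center G : Set G) ∩ {x : G | ∃ a b : G, x = a * b * a⁻¹ * b⁻¹} = {1} := by
  refine Set.Subset.antisymm ?_ ?_
  · rintro _ ⟨hz, a, b, rfl⟩
    rw [← commutatorElement_def] at hz ⊢
    obtain ⟨n, hn, han⟩ := htor a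
    have hzn : ⁅a, b⁆ ^ n = 1 := by
      rw [← commutatorElement_pow_left_of_commute (Subgroup.mem_center_iff.mp hz a),
        commutatorElement_eq_one_iff_mul_comm]
      exact (Subgroup.mem_center_iff.mp han b).symm
    by_contra hne
    exact htf _ hz hne n hn hzn
  · rintro _ rfl
    exact ⟨Subgroup.one_mem _, 1, 1, by group⟩
end

section
/- Let G be a group, V a real Banach space, and φ : G → V a quasi-homomorphism. Then for every g ∈ G the sequence (φ(gⁿ)/n)ₙ converges in V, and the map φ̂ : G → V defined by φ̂(g) := lim_{n→∞} φ(gⁿ)/n is a homogeneous quasi-homomorphism; in particular φ̂ has finite defect (at most 4·D_φ) and satisfies φ̂(gᵏ) = k·φ̂(g) for every g ∈ G and every integer k. -/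
/-!
Iterating the defect bound gives `‖φ(gⁿ) - n • φ(g)‖ ≤ n·D`. Dividing by `n` and applying this
to `gᵐ` shows that `φ(gⁿ)/n` is Cauchy, and that its limit `φ̂` stays within `D` of `φ`, so `φ̂`
has defect at most `D + 3D`. Homogeneity holds because `φ((gᵏ)ⁿ)` and `k • φ(gⁿ)` (resp.
`φ(g⁻ⁿ)` and `-φ(gⁿ)`) differ by a bounded amount, which disappears after dividing by `n`.
-/

open Filter Topology

section Homogenization

variable {G V : Type*} [Group G] [NormedAddCommGroup V]

def DefectLE (φ : G → V) (D : ℝ) : Prop :=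
  ∀ g h : G, ‖φ (g * h) - φ g - φ h‖ ≤ D

variable {φ ψ : G → V} {D C : ℝ}

namespace DefectLE

theorem nonneg (hD : DefectLE φ D) : 0 ≤ D :=
  (norm_nonneg _).trans (hD 1 1)

theorem of_norm_sub_le (hD : DefectLE φ D) (hψ : ∀ g, ‖ψ g - φ g‖ ≤ C) :
    DefectLE ψ (D + 3 * C) := by
  intro g h
  have hsplit : ψ (g * h) - ψ g - ψ h
      = (φ (g * h) - φ g - φ h) + (ψ (g * h) - φ (g * h)) + (φ g - ψ g) + (φ h - ψ h) := by
    abel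
  rw [hsplit]
  refine norm_add₄_le.trans ?_
  rw [norm_sub_rev (φ g), norm_sub_rev (φ h)]
  linarith [hD g h, hψ (g * h), hψ g, hψ h]

end DefectLE

variable [NormedSpace ℝ V]

noncomputable def homogenization (φ : G → V) (g : G) : V :=
  limUnder atTop fun n : ℕ => (n : ℝ)⁻¹ • φ (g ^ n)

namespace DefectLE

theorem norm_map_pow_sub_le (hD : DefectLE φ D) (g : G) {n : ℕ} (hn : 1 ≤ n) :
    ‖φ (g ^ n) - (n : ℝ) • φ g‖ ≤ n * D := by
  induction n, hn using Nat.le_induction with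
  | base => simpa using hD.nonneg
  | succ n _ ih =>
    have hsplit : φ (g ^ (n + 1)) - ((n + 1 : ℕ) : ℝ) • φ g
        = (φ (g ^ n * g) - φ (g ^ n) - φ g) + (φ (g ^ n) - (n : ℝ) • φ g) := by
      rw [pow_succ]; push_cast; rw [add_smul, one_smul]; abel
    rw [hsplit]
    refine (norm_add_le _ _).trans ?_
    push_cast
    linarith [hD (g ^ n) g]

theorem norm_inv_smul_map_pow_sub_le (hD : DefectLE φ D) (g : G) {n : ℕ} (hn : 1 ≤ n) :
    ‖(n : ℝ)⁻¹ • φ (g ^ n) - φ g‖ ≤ D := by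
  have hn0 : (n : ℝ) ≠ 0 := by positivity
  have hsplit : (n : ℝ)⁻¹ • φ (g ^ n) - φ g = (n : ℝ)⁻¹ • (φ (g ^ n) - (n : ℝ) • φ g) := by
    rw [smul_sub, smul_smul, inv_mul_cancel₀ hn0, one_smul]
  rw [hsplit, norm_smul, norm_inv, RCLike.norm_natCast, inv_mul_le_iff₀ (by positivity)]
  exact hD.norm_map_pow_sub_le g hn

theorem norm_inv_smul_map_pow_mul_sub_le (hD : DefectLE φ D) (g : G) (m : ℕ) {n : ℕ}
    (hn : 1 ≤ n) :
    ‖((m * n : ℕ) : ℝ)⁻¹ • φ (g ^ (m * n)) - (m : ℝ)⁻¹ • φ (g ^ m)‖ ≤ D / m := by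
  have hsplit : ((m * n : ℕ) : ℝ)⁻¹ • φ (g ^ (m * n)) - (m : ℝ)⁻¹ • φ (g ^ m)
      = (m : ℝ)⁻¹ • ((n : ℝ)⁻¹ • φ ((g ^ m) ^ n) - φ (g ^ m)) := by
    rw [← pow_mul, smul_sub, smul_smul, Nat.cast_mul, mul_inv]
  rw [hsplit, norm_smul, norm_inv, RCLike.norm_natCast, div_eq_inv_mul]
  gcongr
  exact hD.norm_inv_smul_map_pow_sub_le (g ^ m) hn

theorem dist_inv_smul_map_pow_le (hD : DefectLE φ D) (g : G) {m n : ℕ} (hm : 1 ≤ m)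
    (hn : 1 ≤ n) :
    dist ((m : ℝ)⁻¹ • φ (g ^ m)) ((n : ℝ)⁻¹ • φ (g ^ n)) ≤ D / m + D / n := by
  have hm' := hD.norm_inv_smul_map_pow_mul_sub_le g m hn
  have hn' := hD.norm_inv_smul_map_pow_mul_sub_le g n hm
  rw [Nat.mul_comm n m] at hn'
  rw [← dist_eq_norm] at hm' hn'
  exact (dist_triangle_left _ _ _).trans (add_le_add hm' hn')

theorem cauchySeq_inv_smul_map_pow (hD : DefectLE φ D) (g : G) :
    CauchySeq fun n : ℕ => (n : ℝ)⁻¹ • φ (g ^ n) := by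
  rw [← cauchySeq_shift 1]
  refine cauchySeq_of_le_tendsto_0' (fun n : ℕ => 2 * D / ((n + 1 : ℕ) : ℝ)) (fun m n hmn => ?_)
    ((tendsto_const_div_atTop_nhds_zero_nat (2 * D)).comp (tendsto_add_atTop_nat 1))
  refine (hD.dist_inv_smul_map_pow_le g (by omega) (by omega)).trans ?_
  rw [two_mul, add_div]
  gcongr
  exact hD.nonneg

variable [CompleteSpace V]

theorem tendsto_homogenization (hD : DefectLE φ D) (g : G) :
    Tendsto (fun n : ℕ => (n : ℝ)⁻¹ • φ (g ^ n)) atTop (𝓝 (homogenization φ g)) :=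
  (hD.cauchySeq_inv_smul_map_pow g).tendsto_limUnder

theorem norm_homogenization_sub_le (hD : DefectLE φ D) (g : G) :
    ‖homogenization φ g - φ g‖ ≤ D :=
  le_of_tendsto ((hD.tendsto_homogenization g).sub_const (φ g)).norm <|
    (eventually_ge_atTop 1).mono fun _ hn => hD.norm_inv_smul_map_pow_sub_le g hn

theorem homogenization_eq_smul_of_bounded (hD : DefectLE φ D) {x y : G} (c : ℝ)
    (hbdd : ∀ n : ℕ, ‖φ (x ^ n) - c • φ (y ^ n)‖ ≤ C) :
    homogenization φ x = c • homogenization φ y := by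
  have hlim := (hD.tendsto_homogenization x).sub ((hD.tendsto_homogenization y).const_smul c)
  have hzero : Tendsto (fun n : ℕ => (n : ℝ)⁻¹ • φ (x ^ n) - c • ((n : ℝ)⁻¹ • φ (y ^ n)))
      atTop (𝓝 0) := by
    simp only [smul_comm c, ← smul_sub]
    exact tendsto_inv_atTop_nhds_zero_nat.zero_smul_isBoundedUnder_le
      (isBoundedUnder_of ⟨C, hbdd⟩)
  exact sub_eq_zero.mp (tendsto_nhds_unique hlim hzero)

theorem homogenization_pow (hD : DefectLE φ D) (g : G) (k : ℕ) :
    homogenization φ (g ^ k) = (k : ℝ) • homogenization φ g := by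
  rcases Nat.eq_zero_or_pos k with rfl | hk
  · simpa using hD.homogenization_eq_smul_of_bounded (x := 1) (y := g) 0 (C := ‖φ 1‖)
      (by simp)
  · refine hD.homogenization_eq_smul_of_bounded (k : ℝ) (C := k * D) fun n => ?_
    rw [← pow_mul, mul_comm, pow_mul]
    exact hD.norm_map_pow_sub_le (g ^ n) hk

theorem homogenization_inv (hD : DefectLE φ D) (g : G) :
    homogenization φ g⁻¹ = -homogenization φ g := by
  rw [← neg_one_smul ℝ (homogenization φ g)]
  refine hD.homogenization_eq_smul_of_bounded (-1) (C := D + ‖φ 1‖) fun n => ?_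
  have hcancel : g⁻¹ ^ n * g ^ n = 1 := by rw [inv_pow, inv_mul_cancel]
  have h := hD (g⁻¹ ^ n) (g ^ n)
  rw [hcancel] at h
  calc ‖φ (g⁻¹ ^ n) - (-1 : ℝ) • φ (g ^ n)‖ = ‖(φ 1 - φ (g⁻¹ ^ n) - φ (g ^ n)) - φ 1‖ := by
        rw [← norm_neg]; congr 1; rw [neg_one_smul]; abel
    _ ≤ D + ‖φ 1‖ := (norm_sub_le _ _).trans (by linarith)

theorem homogenization_zpow (hD : DefectLE φ D) (g : G) (k : ℤ) :
    homogenization φ (g ^ k) = (k : ℝ) • homogenization φ g := by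
  obtain ⟨n, rfl | rfl⟩ := k.eq_nat_or_neg
  · simpa using hD.homogenization_pow g n
  · rw [zpow_neg, zpow_natCast, hD.homogenization_inv, hD.homogenization_pow]
    push_cast
    rw [neg_smul]

end DefectLE

variable [CompleteSpace V]

theorem defectLE_homogenization (hD : DefectLE φ D) : DefectLE (homogenization φ) (4 * D) :=
  (by ring : D + 3 * D = 4 * D) ▸ hD.of_norm_sub_le hD.norm_homogenization_sub_le

end Homogenization

/-- Homogenization of a quasi-homomorphism into a real Banach space: the
limits `φ(gⁿ)/n` exist and define a homogeneous quasi-homomorphism whose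
defect is at most `4·D_φ`. -/
theorem homogenization_exists {G V : Type*} [Group G]
    [NormedAddCommGroup V] [NormedSpace ℝ V] [CompleteSpace V]
    (φ : G → V) (D : ℝ)
    (hD : ∀ g h : G, ‖φ (g * h) - φ g - φ h‖ ≤ D) :
    ∃ φh : G → V,
      (∀ g : G, Filter.Tendsto (fun n : ℕ => (n : ℝ)⁻¹ • φ (g ^ n))
        Filter.atTop (nhds (φh g))) ∧
      (∀ g h : G, ‖φh (g * h) - φh g - φh h‖ ≤ 4 * D) ∧
      (∀ g : G, ∀ k : ℤ, φh (g ^ k) = (k : ℝ) • φh g) :=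
  ⟨homogenization φ, DefectLE.tendsto_homogenization hD, defectLE_homogenization hD,
    DefectLE.homogenization_zpow hD⟩
end

section
/- Let G be a group, V a real Banach space, and φ : G → V a homogeneous quasi-homomorphism. If g, h ∈ G are such that the commutator [g,h] := g·h·g⁻¹·h⁻¹ lies in the center Z(G), then φ([g,h]) = 0. In other words, Z(G) ∩ { [g,h] : g, h ∈ G } is contained in the kernel of φ. -/
-- auxiliary: power identity for central commutator
lemma central_comm_pow {G : Type*} [Group G] (g h : G)
    (hc : ∀ x : G, Commute (g * h * g⁻¹ * h⁻¹) x) :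
    ∀ n : ℕ, (g * h) ^ n =
      (g * h * g⁻¹ * h⁻¹) ^ (-(n.choose 2 : ℤ)) * g ^ n * h ^ n := by
  set c := g * h * g⁻¹ * h⁻¹ with hcdef
  have hg : h * g = c⁻¹ * (g * h) := by
    rw [hcdef]; group
  have key : ∀ n : ℕ, h ^ n * g = c ^ (-(n : ℤ)) * g * h ^ n := by
    intro n
    induction n with
    | zero => simp
    | succ n ih =>
      have : h ^ (n+1) * g = h * (h ^ n * g) := by rw [pow_succ']; group
      rw [this, ih]
      have hcomm : h * c ^ (-(n:ℤ)) = c ^ (-(n:ℤ)) * h := ((hc h).zpow_left _).symm.eq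
      calc h * (c ^ (-(n:ℤ)) * g * h ^ n) = (h * c ^ (-(n:ℤ))) * g * h ^ n := by group
        _ = c ^ (-(n:ℤ)) * (h * g) * h ^ n := by rw [hcomm]; group
        _ = c ^ (-(n:ℤ)) * (c⁻¹ * (g * h)) * h ^ n := by rw [hg]
        _ = c ^ (-((n:ℤ)+1)) * g * h ^ (n+1) := by
              rw [neg_add, zpow_add, zpow_neg_one, pow_succ]; group
        _ = c ^ (-(((n:ℕ)+1 : ℕ) : ℤ)) * g * h ^ (n+1) := by push_cast; ring_nf
  intro n
  induction n with
  | zero => simp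
  | succ n ih =>
    rw [pow_succ, ih]
    have : c ^ (-(n.choose 2 : ℤ)) * g ^ n * h ^ n * (g * h)
        = c ^ (-(n.choose 2 : ℤ)) * g ^ n * (h ^ n * g) * h := by group
    rw [this, key n]
    have hch : Nat.choose (n+1) 2 = n.choose 2 + n := by
      rw [Nat.choose_succ_succ]; simp [Nat.choose_one_right, Nat.add_comm]
    have hcomm : g ^ n * c ^ (-(n:ℤ)) = c ^ (-(n:ℤ)) * g ^ n :=
      (((hc (g^n)).zpow_left _).eq).symm
    calc c ^ (-(n.choose 2 : ℤ)) * g ^ n * (c ^ (-(n:ℤ)) * g * h ^ n) * h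
        = c ^ (-(n.choose 2 : ℤ)) * (g ^ n * c ^ (-(n:ℤ))) * g * h ^ n * h := by group
      _ = c ^ (-(n.choose 2 : ℤ)) * c ^ (-(n:ℤ)) * g ^ (n+1) * h ^ (n+1) := by
            rw [hcomm, pow_succ, pow_succ]; group
      _ = c ^ (-(((n+1).choose 2 : ℕ) : ℤ)) * g ^ (n+1) * h ^ (n+1) := by
            rw [hch, ← zpow_add]; push_cast; ring_nf

/-- A homogeneous quasi-homomorphism vanishes on every commutator lying in
the center. -/
theorem homogeneous_qh_vanishes_on_central_commutators {G V : Type*} [Group G]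
    [NormedAddCommGroup V] [NormedSpace ℝ V] [CompleteSpace V]
    (φ : G → V) (D : ℝ)
    (hD : ∀ g h : G, ‖φ (g * h) - φ g - φ h‖ ≤ D)
    (hhom : ∀ g : G, ∀ k : ℤ, φ (g ^ k) = (k : ℝ) • φ g) :
    ∀ g h : G, g * h * g⁻¹ * h⁻¹ ∈ Subgroup.center G →
      φ (g * h * g⁻¹ * h⁻¹) = 0 := by
  intro g h hZ
  set c := g * h * g⁻¹ * h⁻¹ with hcdef
  have hc : ∀ x : G, Commute c x := fun x => ((Subgroup.mem_center_iff.mp hZ) x).symm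
  have hD0 : 0 ≤ D := le_trans (norm_nonneg _) (hD 1 1)
  -- main bound: (n.choose 2) * ‖φ c‖ ≤ (n+2) * D
  have hbound : ∀ n : ℕ, (n.choose 2 : ℝ) * ‖φ c‖ ≤ ((n : ℝ) + 2) * D := by
    intro n
    have hid := central_comm_pow g h hc n
    set a := c ^ (-(n.choose 2 : ℤ)) with ha
    have h1 : ‖φ ((g*h)^n) - φ a - φ (g ^ n * h ^ n)‖ ≤ D := by
      have := hD a (g ^ n * h ^ n)
      rwa [← mul_assoc, ← hid] at this
    have h2 : ‖φ (g ^ n * h ^ n) - φ (g ^ n) - φ (h ^ n)‖ ≤ D := hD _ _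
    have e1 : φ ((g*h)^n) = (n : ℝ) • φ (g*h) := by
      have := hhom (g*h) (n : ℤ); rwa [zpow_natCast, Int.cast_natCast] at this
    have e2 : φ a = -(n.choose 2 : ℝ) • φ c := by
      have := hhom c (-(n.choose 2 : ℤ)); rw [ha, this]; push_cast; ring_nf
    have e3 : φ (g ^ n) = (n : ℝ) • φ g := by
      have := hhom g (n : ℤ); rwa [zpow_natCast, Int.cast_natCast] at this
    have e4 : φ (h ^ n) = (n : ℝ) • φ h := by
      have := hhom h (n : ℤ); rwa [zpow_natCast, Int.cast_natCast] at this
    have h3 : ‖φ (g*h) - φ g - φ h‖ ≤ D := hD g h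
    have combined : ‖(n.choose 2 : ℝ) • φ c‖ ≤ D + D + (n:ℝ) * D := by
      have expand : (n.choose 2 : ℝ) • φ c =
          (φ ((g*h)^n) - φ a - φ (g ^ n * h ^ n))
          + (φ (g ^ n * h ^ n) - φ (g ^ n) - φ (h ^ n))
          - (n : ℝ) • (φ (g*h) - φ g - φ h) := by
        rw [e1, e2, e3, e4]; module
      rw [expand]
      calc ‖_‖ ≤ ‖(φ ((g*h)^n) - φ a - φ (g ^ n * h ^ n))
          + (φ (g ^ n * h ^ n) - φ (g ^ n) - φ (h ^ n))‖
          + ‖(n : ℝ) • (φ (g*h) - φ g - φ h)‖ := norm_sub_le _ _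
        _ ≤ (D + D) + (n:ℝ) * D := by
            gcongr
            · exact le_trans (norm_add_le _ _) (add_le_add h1 h2)
            · rw [norm_smul, Real.norm_natCast]
              exact mul_le_mul_of_nonneg_left h3 (Nat.cast_nonneg n)
        _ = D + D + (n:ℝ) * D := rfl
    rw [norm_smul, Real.norm_natCast] at combined
    linarith
  -- conclude ‖φ c‖ = 0
  by_contra hne
  have hx : 0 < ‖φ c‖ := norm_pos_iff.mpr hne
  obtain ⟨N, hN⟩ := exists_nat_gt (8 * D / ‖φ c‖)
  have hN' : 8 * D < (N : ℝ) * ‖φ c‖ := (div_lt_iff₀ hx).mp hN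
  have hb := hbound (N + 3)
  rw [Nat.cast_choose_two] at hb
  push_cast at hb
  nlinarith [mul_le_mul_of_nonneg_right (hN'.le) (le_of_lt hx), hx.le,
    mul_nonneg (Nat.cast_nonneg N : (0:ℝ) ≤ N) hx.le,
    mul_nonneg (Nat.cast_nonneg N : (0:ℝ) ≤ N) hD0]
end

section
/- Let G be a group and V a real Banach space. Suppose there exists a homogeneous quasi-homomorphism φ : G → V such that φ(z) ≠ 0 for every z ∈ Z(G) with z ≠ e. Then Z(G) ∩ { [a,b] : a, b ∈ G } = {e}; equivalently, the quotient map G → G/Z(G) is a commutant-preserving extension (G is self-CP). -/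
/-- If the non-identity central elements of `G` are separated from the
identity by a homogeneous quasi-homomorphism, then the center meets the
set of commutators only in the identity (i.e. `G` is self-CP). -/
theorem self_cp_of_separating_qh {G V : Type*} [Group G]
    [NormedAddCommGroup V] [NormedSpace ℝ V] [CompleteSpace V]
    (φ : G → V) (D : ℝ)
    (hD : ∀ g h : G, ‖φ (g * h) - φ g - φ h‖ ≤ D)
    (hhom : ∀ g : G, ∀ k : ℤ, φ (g ^ k) = (k : ℝ) • φ g)
    (hsep : ∀ z : G, z ∈ Subgroup.center G → z ≠ 1 → φ z ≠ 0) :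
    (Subgroup.center G : Set G) ∩ {x : G | ∃ a b : G, x = a * b * a⁻¹ * b⁻¹} = {1} := by
  have hnat : ∀ g : G, ∀ n : ℕ, φ (g ^ n) = (n : ℝ) • φ g := by
    intro g n
    have := hhom g (n : ℤ)
    rw [zpow_natCast] at this
    simpa using this
  have hinv : ∀ g : G, φ g⁻¹ = - φ g := by
    intro g
    have := hhom g (-1)
    simpa using this
  ext x
  simp only [Set.mem_inter_iff, Set.mem_setOf_eq, Set.mem_singleton_iff, SetLike.mem_coe]
  constructor
  · rintro ⟨hxc, a, b, hx⟩
    by_contra hne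
    have hφ : φ x ≠ 0 := hsep x hxc hne
    have hcomm : ∀ g : G, g * x = x * g := fun g =>
      (Subgroup.mem_center_iff.mp hxc g)
    -- key conjugation identity
    have hconj : ∀ n : ℕ, a * b ^ n * a⁻¹ = x ^ n * b ^ n := by
      intro n
      induction n with
      | zero => simp
      | succ n ih =>
        have h1 : a * b ^ (n + 1) * a⁻¹ = (a * b ^ n * a⁻¹) * (a * b * a⁻¹) := by
          rw [pow_succ]; group
        have h2 : a * b * a⁻¹ = x * b := by rw [hx]; group
        rw [h1, ih, h2]
        calc x ^ n * b ^ n * (x * b) = x ^ n * (b ^ n * x) * b := by group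
          _ = x ^ n * (x * b ^ n) * b := by rw [hcomm]
          _ = x ^ (n + 1) * b ^ (n + 1) := by rw [pow_succ, pow_succ]; group
    -- bound ‖φ (x ^ n)‖
    have hbound : ∀ n : ℕ, ‖φ (x ^ n)‖ ≤ 3 * D := by
      intro n
      have hxn : (a * b ^ n * a⁻¹) * (b ^ n)⁻¹ = x ^ n := by
        rw [hconj]; group
      have h1 := hD (a * b ^ n * a⁻¹) (b ^ n)⁻¹
      rw [hxn, hinv] at h1
      have h2 := hD (a * b ^ n) a⁻¹
      rw [hinv] at h2
      have h3 := hD a (b ^ n)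
      have key : φ (x ^ n) =
          (φ (x ^ n) - φ (a * b ^ n * a⁻¹) - -φ (b ^ n)) +
          (φ (a * b ^ n * a⁻¹) - φ (a * b ^ n) - -φ a) +
          (φ (a * b ^ n) - φ a - φ (b ^ n)) := by abel
      calc ‖φ (x ^ n)‖ = ‖(φ (x ^ n) - φ (a * b ^ n * a⁻¹) - -φ (b ^ n)) +
          (φ (a * b ^ n * a⁻¹) - φ (a * b ^ n) - -φ a) +
          (φ (a * b ^ n) - φ a - φ (b ^ n))‖ := by rw [← key]
        _ ≤ ‖(φ (x ^ n) - φ (a * b ^ n * a⁻¹) - -φ (b ^ n)) +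
          (φ (a * b ^ n * a⁻¹) - φ (a * b ^ n) - -φ a)‖ +
          ‖φ (a * b ^ n) - φ a - φ (b ^ n)‖ := norm_add_le _ _
        _ ≤ ‖φ (x ^ n) - φ (a * b ^ n * a⁻¹) - -φ (b ^ n)‖ +
          ‖φ (a * b ^ n * a⁻¹) - φ (a * b ^ n) - -φ a‖ +
          ‖φ (a * b ^ n) - φ a - φ (b ^ n)‖ := by
            gcongr; exact norm_add_le _ _
        _ ≤ 3 * D := by
            have h2' : a * b ^ n * a⁻¹ = (a * b ^ n) * a⁻¹ := by group
            rw [h2']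
            linarith
    have hpos : 0 < ‖φ x‖ := norm_pos_iff.mpr hφ
    obtain ⟨n, hn⟩ := exists_nat_gt (3 * D / ‖φ x‖)
    have hkey : (n : ℝ) * ‖φ x‖ ≤ 3 * D := by
      have := hbound n
      rwa [hnat, norm_smul, Real.norm_natCast] at this
    have : 3 * D < (n : ℝ) * ‖φ x‖ := (div_lt_iff₀ hpos).mp hn
    linarith
  · rintro rfl
    exact ⟨Subgroup.one_mem _, 1, 1, by group⟩
end

section
/- Let G̃ denote the group (under composition) of self-homeomorphisms α : ℝ → ℝ that are strictly increasing and satisfy α(x+1) = α(x) + 1 for all x ∈ ℝ. If ζ ∈ G̃ commutes with every element of G̃, then there exists an integer k such that ζ(x) = x + k for all x ∈ ℝ. Conversely, every integer translation x ↦ x + k commutes with every element of G̃; hence the center of G̃ is exactly the group of integer translations, which is isomorphic to ℤ. -/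
/-
A central element `ζ` commutes with every translation `x ↦ x + u`, so it is itself a translation
`x ↦ x + c` with `c = ζ 0`. It also commutes with a lift `β` whose fixed points are exactly the
integers, such as `β x = x + (1 - cos 2πx) / 8π`; then `β c = β (ζ 0) = ζ (β 0) = c`, so `c ∈ ℤ`.
-/

/-- An element of `Homeo~₊(S¹)`: a self-homeomorphism of `ℝ` which is
strictly increasing and commutes with translation by `1`. -/
def IsLift (α : ℝ ≃ₜ ℝ) : Prop :=
  StrictMono ⇑α ∧ ∀ x : ℝ, α (x + 1) = α x + 1

open Real Filter

theorem IsLift.map_add_intCast {α : ℝ ≃ₜ ℝ} (hα : IsLift α) (x : ℝ) (k : ℤ) :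
    α (x + k) = α x + k :=
  AddConstMapClass.map_add_int (⟨α, hα.2⟩ : AddConstMap ℝ ℝ 1 1) x k

theorem isLift_addRight (u : ℝ) : IsLift (Homeomorph.addRight u) :=
  ⟨fun _ _ h => add_lt_add_left h u, fun x => add_right_comm x 1 u⟩

namespace IntFixingLift

noncomputable def toFun (x : ℝ) : ℝ := x + (1 - cos (2 * π * x)) / (8 * π)

theorem toFun_add_one (x : ℝ) : toFun (x + 1) = toFun x + 1 := by
  rw [toFun, toFun, mul_add, mul_one, cos_add_two_pi]
  ring

theorem toFun_eq_self_iff (x : ℝ) : toFun x = x ↔ ∃ k : ℤ, x = k := by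
  have hπ : 2 * π ≠ 0 := by positivity
  rw [toFun, add_eq_left, div_eq_zero_iff, sub_eq_zero, eq_comm, cos_eq_one_iff]
  simp only [show (8 * π) ≠ 0 by positivity, or_false]
  refine exists_congr fun k => ?_
  rw [mul_comm, mul_right_inj' hπ, eq_comm]

theorem strictMono_toFun : StrictMono toFun := by
  intro x y hxy
  have hcos : cos (2 * π * y) - cos (2 * π * x) ≤ 2 * π * (y - x) := by
    calc cos (2 * π * y) - cos (2 * π * x)
        ≤ |cos (2 * π * y) - cos (2 * π * x)| := le_abs_self _
      _ ≤ |2 * π * y - 2 * π * x| := abs_cos_sub_cos_le _ _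
      _ = 2 * π * (y - x) := by
        rw [← mul_sub, abs_of_pos (mul_pos two_pi_pos (sub_pos.2 hxy))]
  have hosc :
      (1 - cos (2 * π * x)) / (8 * π) - (1 - cos (2 * π * y)) / (8 * π) ≤ (y - x) / 4 := by
    rw [← sub_div, div_le_iff₀ (by positivity)]
    nlinarith [pi_pos]
  simp only [toFun]
  linarith

theorem self_le_toFun (x : ℝ) : x ≤ toFun x :=
  le_add_of_nonneg_right (div_nonneg (sub_nonneg.2 (cos_le_one _)) (by positivity))

theorem toFun_le_add_one (x : ℝ) : toFun x ≤ x + 1 := by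
  refine add_le_add_right ((div_le_one (by positivity : (0 : ℝ) < 8 * π)).2 ?_) x
  linarith [neg_one_le_cos (2 * π * x), pi_gt_three]

theorem surjective_toFun : Function.Surjective toFun :=
  (continuous_id.add (by fun_prop)).surjective
    (tendsto_atTop_mono self_le_toFun tendsto_id)
    (tendsto_atBot_mono toFun_le_add_one (tendsto_atBot_add_const_right _ 1 tendsto_id))

end IntFixingLift

noncomputable def intFixingLift : ℝ ≃ₜ ℝ :=
  (IntFixingLift.strictMono_toFun.orderIsoOfSurjective _
    IntFixingLift.surjective_toFun).toHomeomorph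

theorem isLift_intFixingLift : IsLift intFixingLift :=
  ⟨IntFixingLift.strictMono_toFun, IntFixingLift.toFun_add_one⟩

theorem intFixingLift_eq_self_iff (x : ℝ) : intFixingLift x = x ↔ ∃ k : ℤ, x = k :=
  IntFixingLift.toFun_eq_self_iff x

/-- The center of `Homeo~₊(S¹)` is exactly the group of integer
translations: any element commuting with every element of the group is an
integer translation, and conversely every integer translation is in the
center. -/
theorem center_of_lifted_homeo :
    (∀ ζ : ℝ ≃ₜ ℝ, IsLift ζ →
      (∀ α : ℝ ≃ₜ ℝ, IsLift α → ∀ x : ℝ, ζ (α x) = α (ζ x)) →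
      ∃ k : ℤ, ∀ x : ℝ, ζ x = x + k) ∧
    (∀ k : ℤ, ∀ α : ℝ ≃ₜ ℝ, IsLift α → ∀ x : ℝ, α (x + k) = α x + k) := by
  refine ⟨fun ζ _ hζ => ?_, fun k α hα x => hα.map_add_intCast x k⟩
  have htrans (x : ℝ) : ζ x = x + ζ 0 := by
    simpa [add_comm] using hζ _ (isLift_addRight x) 0
  obtain ⟨k, hk⟩ := (intFixingLift_eq_self_iff (ζ 0)).1 <| by
    have h0 : intFixingLift 0 = 0 := (intFixingLift_eq_self_iff 0).2 ⟨0, by simp⟩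
    simpa [h0] using (hζ _ isLift_intFixingLift 0).symm
  exact ⟨k, fun x => hk ▸ htrans x⟩
end

section
/- Let G̃ denote the group (under composition) of self-homeomorphisms α : ℝ → ℝ that are strictly increasing and satisfy α(x+1) = α(x) + 1 for all x ∈ ℝ. Let α, β ∈ G̃ and suppose there is an integer k such that α(β(α⁻¹(β⁻¹(x)))) = x + k for all x ∈ ℝ (i.e., the commutator of α and β is an integer translation). Then k = 0 and α ∘ β = β ∘ α. Equivalently, the quotient map from G̃ onto Homeo₊(S¹), whose kernel is the group of integer translations, is a commutant-preserving extension. -/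
/-- If the commutator of two elements of `Homeo~₊(S¹)` is an integer
translation, then it is the identity and the two elements commute; i.e.
the covering `Homeo~₊(S¹) → Homeo₊(S¹)` is a commutant-preserving
extension. -/
theorem commutator_integer_translation_trivial (α β : ℝ ≃ₜ ℝ)
    (hα : IsLift α) (hβ : IsLift β) (k : ℤ)
    (hk : ∀ x : ℝ, α (β (α.symm (β.symm x))) = x + k) :
    k = 0 ∧ ∀ x : ℝ, α (β x) = β (α x) := by
  -- key pointwise identity
  have key : ∀ y : ℝ, α (β y) = β (α y) + k := by
    intro y
    have := hk (β (α y))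
    simpa using this
  -- package as CircleDeg1Lift
  set A : CircleDeg1Lift := ⟨⟨⇑α, hα.1.monotone⟩, hα.2⟩ with hA
  set B : CircleDeg1Lift := ⟨⟨⇑β, hβ.1.monotone⟩, hβ.2⟩ with hB
  have hABfun : ∀ x, (A * B) x = α (β x) := fun x => rfl
  have hBAfun : ∀ x, (B * A) x = β (α x) := fun x => rfl
  set Tk : CircleDeg1Liftˣ := CircleDeg1Lift.translate (Multiplicative.ofAdd (k : ℝ)) with hTk
  -- A*B = translate k * (B*A)
  have hmul : A * B = (Tk : CircleDeg1Lift) * (B * A) := by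
    ext x
    rw [hABfun, key]
    show β (α x) + k = (k : ℝ) + β (α x)
    ring
  -- translation numbers
  have hconj : CircleDeg1Lift.translationNumber (A * B)
      = CircleDeg1Lift.translationNumber (B * A) := by
    refine CircleDeg1Lift.translationNumber_eq_of_semiconjBy (f := B) ?_
    show B * (A * B) = (B * A) * B
    rw [mul_assoc]
  have hcomm : Commute ((Tk : CircleDeg1Lift)) (B * A) := by
    ext x
    show (k : ℝ) + (B * A) x = (B * A) ((k : ℝ) + x)
    exact ((B * A).map_int_add k x).symm
  have htau : CircleDeg1Lift.translationNumber (A * B)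
      = (k : ℝ) + CircleDeg1Lift.translationNumber (B * A) := by
    rw [hmul, CircleDeg1Lift.translationNumber_mul_of_commute hcomm,
      CircleDeg1Lift.translationNumber_translate (k : ℝ)]
  have hk0 : (k : ℝ) = 0 := by
    rw [hconj] at htau
    linarith
  have hk0' : k = 0 := by exact_mod_cast hk0
  refine ⟨hk0', fun x => ?_⟩
  rw [key x, hk0', Int.cast_zero, add_zero]
end

section
/- Let G̃ denote the group (under composition) of self-homeomorphisms α : ℝ → ℝ that are strictly increasing and satisfy α(x+1) = α(x) + 1 for all x ∈ ℝ. Then for all α, β ∈ G̃, the commutator [α, β] := α ∘ β ∘ α⁻¹ ∘ β⁻¹ satisfies ℓ([α, β]) < 2, where ℓ(γ) := sup_{t ∈ [0,1]} |γ(t) − t|; equivalently, |α(β(α⁻¹(β⁻¹(t)))) − t| < 2 for all t ∈ ℝ. -/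
/-- The displacement function of a lift has oscillation strictly less than one. -/
lemma lift_osc_lt_one (α : ℝ ≃ₜ ℝ) (hα : IsLift α) (s t : ℝ) :
    |(α t - t) - (α s - s)| < 1 := by
  obtain ⟨hmono, hper⟩ := hα
  have hd : Function.Periodic (fun x => α x - x) 1 := by
    intro x; simp [hper x]
  -- reduce to the case s ≤ t < s + 1
  set n : ℤ := ⌊t - s⌋ with hn
  have ht' : (fun x => α x - x) (t - n * 1) = (fun x => α x - x) t :=
    hd.sub_int_mul_eq n
  set t' : ℝ := t - n with ht'def
  have h1 : s ≤ t' := by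
    have := Int.floor_le (t - s); simp only [ht'def, hn]; linarith
  have h2 : t' < s + 1 := by
    have := Int.lt_floor_add_one (t - s); simp only [ht'def, hn]; linarith
  have key : |(α t' - t') - (α s - s)| < 1 := by
    have hm1 : α s ≤ α t' := hmono.monotone h1
    have hm2 : α t' < α s + 1 := by
      have := hmono h2
      rwa [hper s] at this
    rw [abs_lt]; constructor <;> nlinarith
  have : α t' - t' = α t - t := by
    simpa [ht'def] using ht'
  rwa [this] at key

/-- Pointwise bound for the commutator. -/
lemma commutator_pointwise (α β : ℝ ≃ₜ ℝ) (hα : IsLift α) (hβ : IsLift β) (t : ℝ) :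
    |α (β (α.symm (β.symm t))) - t| < 2 := by
  set s : ℝ := β.symm t with hs
  set r : ℝ := α.symm s with hr
  have hts : β s = t := β.apply_symm_apply t
  have hsr : α r = s := α.apply_symm_apply s
  have h1 : |(α (β r) - β r) - (α r - r)| < 1 := lift_osc_lt_one α hα r (β r)
  have h2 : |(β r - r) - (β s - s)| < 1 := lift_osc_lt_one β hβ s r
  rw [hsr] at h1
  rw [hts] at h2
  have := abs_add_le ((α (β r) - β r) - (s - r)) ((β r - r) - (t - s))
  calc |α (β r) - t| = |((α (β r) - β r) - (s - r)) + ((β r - r) - (t - s))| := by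
        ring_nf
    _ ≤ |(α (β r) - β r) - (s - r)| + |(β r - r) - (t - s)| := abs_add_le _ _
    _ < 2 := by linarith

/-- The length of any commutator in `Homeo~₊(S¹)` is strictly less
than `2`: `ℓ([α,β]) < 2`, equivalently `|[α,β](t) − t| < 2` for all
`t ∈ ℝ`. -/
theorem length_commutator_lt_two (α β : ℝ ≃ₜ ℝ)
    (hα : IsLift α) (hβ : IsLift β) :
    sSup ((fun t : ℝ => |α (β (α.symm (β.symm t))) - t|) '' Set.Icc (0 : ℝ) 1) < 2 ∧
    ∀ t : ℝ, |α (β (α.symm (β.symm t))) - t| < 2 := by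
  have hpt : ∀ t : ℝ, |α (β (α.symm (β.symm t))) - t| < 2 :=
    commutator_pointwise α β hα hβ
  refine ⟨?_, hpt⟩
  have hcont : ContinuousOn (fun t : ℝ => |α (β (α.symm (β.symm t))) - t|)
      (Set.Icc (0 : ℝ) 1) := by
    apply Continuous.continuousOn
    exact ((α.continuous.comp (β.continuous.comp
      (α.symm.continuous.comp β.symm.continuous))).sub continuous_id).abs
  obtain ⟨x, -, hx⟩ := isCompact_Icc.exists_sSup_image_eq
    (Set.nonempty_Icc.mpr zero_le_one) hcont
  rw [hx]
  exact hpt x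
end

section
/- Let G̃ denote the group (under composition) of self-homeomorphisms α : ℝ → ℝ that are strictly increasing and satisfy α(x+1) = α(x) + 1 for all x ∈ ℝ, and define the length ℓ(α) := sup_{t ∈ [0,1]} |α(t) − t|. Then the length-sharp ℓ^♯ is invariant under conjugation: for all α, β ∈ G̃ one has ⌊ℓ(β ∘ α ∘ β⁻¹)⌋ = ⌊ℓ(α)⌋ and ⌈ℓ(β ∘ α ∘ β⁻¹)⌉ = ⌈ℓ(α)⌉, where ⌊·⌋ and ⌈·⌉ denote the floor and ceiling functions. -/
/-- The length of a map `f : ℝ → ℝ`: `ℓ(f) = sup_{t ∈ [0,1]} |f(t) − t|`. -/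
noncomputable def lengthFn (f : ℝ → ℝ) : ℝ :=
  sSup ((fun t : ℝ => |f t - t|) '' Set.Icc (0 : ℝ) 1)

namespace LSharpAux

/-- translation compatibility extends to all integers -/
lemma map_add_int {f : ℝ → ℝ} (hp : ∀ x : ℝ, f (x + 1) = f x + 1)
    (x : ℝ) (n : ℤ) : f (x + n) = f x + n := by
  have hper : Function.Periodic (fun y : ℝ => f y - y) 1 := by
    intro y
    show f (y + 1) - (y + 1) = f y - y
    rw [hp]
    ring
  have h := hper.sub_int_mul_eq (x := x + n) (n := n)
  have hx : x + (n : ℝ) - (n : ℝ) * 1 = x := by ring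
  rw [hx] at h
  have h' : f x - x = f (x + n) - (x + n) := h
  linarith

/-- the displacement set over [0,1] -/
noncomputable def S (f : ℝ → ℝ) : Set ℝ := (fun t : ℝ => f t - t) '' Set.Icc (0:ℝ) 1

lemma S_nonempty (f : ℝ → ℝ) : (S f).Nonempty :=
  ⟨f 0 - 0, ⟨0, by simp, rfl⟩⟩

lemma S_compact {f : ℝ → ℝ} (hf : Continuous f) : IsCompact (S f) :=
  isCompact_Icc.image (hf.sub continuous_id)

/-- every displacement value lies in `S f` when `f` commutes with integer translation -/
lemma disp_mem_S {f : ℝ → ℝ} (hp : ∀ x : ℝ, f (x + 1) = f x + 1) (t : ℝ) :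
    f t - t ∈ S f := by
  refine ⟨Int.fract t, ⟨Int.fract_nonneg t, (Int.fract_lt_one t).le⟩, ?_⟩
  have ht : Int.fract t + (⌊t⌋ : ℤ) = t := by
    rw [Int.fract]; ring
  have h := map_add_int hp (Int.fract t) ⌊t⌋
  rw [ht] at h
  show f (Int.fract t) - Int.fract t = f t - t
  rw [h, Int.fract]
  ring

/-- characterization: sSup (S f) ≤ c ↔ pointwise upper bound -/
lemma sSup_le_iff' {f : ℝ → ℝ} (hf : Continuous f)
    (hp : ∀ x : ℝ, f (x + 1) = f x + 1) (c : ℝ) :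
    sSup (S f) ≤ c ↔ ∀ t : ℝ, f t ≤ t + c := by
  constructor
  · intro h t
    have h1 : f t - t ≤ sSup (S f) :=
      le_csSup (S_compact hf).bddAbove (disp_mem_S hp t)
    linarith
  · intro h
    apply csSup_le (S_nonempty f)
    rintro x ⟨t, -, rfl⟩
    have := h t
    show f t - t ≤ c
    linarith

lemma le_sSup_iff' {f : ℝ → ℝ} (hf : Continuous f)
    (hp : ∀ x : ℝ, f (x + 1) = f x + 1) (c : ℝ) :
    c ≤ sSup (S f) ↔ ∃ t : ℝ, t + c ≤ f t := by
  constructor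
  · intro h
    obtain ⟨t, -, hx⟩ := (S_compact hf).sSup_mem (S_nonempty f)
    refine ⟨t, ?_⟩
    have hx' : f t - t = sSup (S f) := hx
    linarith
  · rintro ⟨t, ht⟩
    have h1 : f t - t ≤ sSup (S f) :=
      le_csSup (S_compact hf).bddAbove (disp_mem_S hp t)
    linarith

lemma le_sInf_iff' {f : ℝ → ℝ} (hf : Continuous f)
    (hp : ∀ x : ℝ, f (x + 1) = f x + 1) (c : ℝ) :
    c ≤ sInf (S f) ↔ ∀ t : ℝ, t + c ≤ f t := by
  constructor
  · intro h t
    have h1 : sInf (S f) ≤ f t - t :=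
      csInf_le (S_compact hf).bddBelow (disp_mem_S hp t)
    linarith
  · intro h
    apply le_csInf (S_nonempty f)
    rintro x ⟨t, -, rfl⟩
    have := h t
    show c ≤ f t - t
    linarith

lemma sInf_le_iff' {f : ℝ → ℝ} (hf : Continuous f)
    (hp : ∀ x : ℝ, f (x + 1) = f x + 1) (c : ℝ) :
    sInf (S f) ≤ c ↔ ∃ t : ℝ, f t ≤ t + c := by
  constructor
  · intro h
    obtain ⟨t, -, hx⟩ := (S_compact hf).sInf_mem (S_nonempty f)
    refine ⟨t, ?_⟩
    have hx' : f t - t = sInf (S f) := hx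
    linarith
  · rintro ⟨t, ht⟩
    have h1 : sInf (S f) ≤ f t - t :=
      csInf_le (S_compact hf).bddBelow (disp_mem_S hp t)
    linarith

/-- `lengthFn f = max (sSup (S f)) (-(sInf (S f)))` -/
lemma lengthFn_eq {f : ℝ → ℝ} (hf : Continuous f) :
    lengthFn f = max (sSup (S f)) (-(sInf (S f))) := by
  set T : Set ℝ := (fun t : ℝ => |f t - t|) '' Set.Icc (0:ℝ) 1 with hT
  have hTc : IsCompact T := isCompact_Icc.image ((hf.sub continuous_id).abs)
  have hTne : T.Nonempty := ⟨|f 0 - 0|, ⟨0, by simp, rfl⟩⟩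
  have hSc := S_compact hf
  have hSne := S_nonempty f
  apply le_antisymm
  · apply csSup_le hTne
    rintro x ⟨t, ht, rfl⟩
    have h1 : f t - t ≤ sSup (S f) := le_csSup hSc.bddAbove ⟨t, ht, rfl⟩
    have h2 : sInf (S f) ≤ f t - t := csInf_le hSc.bddBelow ⟨t, ht, rfl⟩
    show |f t - t| ≤ max (sSup (S f)) (-(sInf (S f)))
    rw [abs_le']
    refine ⟨h1.trans (le_max_left _ _), ?_⟩
    have h3 : -(max (sSup (S f)) (-(sInf (S f)))) ≤ sInf (S f) := by
      have := le_max_right (sSup (S f)) (-(sInf (S f)))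
      linarith
    linarith
  · rcases le_total (-(sInf (S f))) (sSup (S f)) with hc | hc
    · rw [max_eq_left hc]
      obtain ⟨t, ht, hx⟩ := hSc.sSup_mem hSne
      have hx' : f t - t = sSup (S f) := hx
      have h4 : sSup (S f) ≤ |f t - t| := by
        rw [← hx']
        exact le_abs_self _
      exact h4.trans (le_csSup hTc.bddAbove ⟨t, ht, rfl⟩)
    · rw [max_eq_right hc]
      obtain ⟨t, ht, hx⟩ := hSc.sInf_mem hSne
      have hx' : f t - t = sInf (S f) := hx
      have h : -(sInf (S f)) ≤ |f t - t| := by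
        rw [← hx']
        exact neg_le_abs _
      exact h.trans (le_csSup hTc.bddAbove ⟨t, ht, rfl⟩)

/-- the inverse of a lift is a lift -/
lemma isLift_symm {β : ℝ ≃ₜ ℝ} (hβ : IsLift β) : IsLift β.symm := by
  constructor
  · intro a b hab
    by_contra h
    push_neg at h
    have := hβ.1.monotone h
    simp only [Homeomorph.apply_symm_apply] at this
    exact absurd hab (not_lt.mpr this)
  · intro x
    apply hβ.1.injective
    simp only [Homeomorph.apply_symm_apply]
    rw [hβ.2]
    simp

/-- conjugation transfer for `∀` lower bounds -/
lemma forall_lower_transfer {f : ℝ → ℝ} {β : ℝ ≃ₜ ℝ} (hβ : IsLift β) (n : ℤ) :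
    (∀ t : ℝ, t + n ≤ f t) ↔ (∀ x : ℝ, x + n ≤ β (f (β.symm x))) := by
  have hβ' := isLift_symm hβ
  constructor
  · intro h x
    have h1 : β.symm x + n ≤ f (β.symm x) := h _
    have h2 := hβ.1.monotone h1
    rw [map_add_int hβ.2] at h2
    simpa using h2
  · intro h t
    have h1 := h (β t)
    rw [Homeomorph.symm_apply_apply] at h1
    have h2 := hβ'.1.monotone h1
    rw [map_add_int hβ'.2] at h2
    simpa using h2

/-- conjugation transfer for `∀` upper bounds -/
lemma forall_upper_transfer {f : ℝ → ℝ} {β : ℝ ≃ₜ ℝ} (hβ : IsLift β) (n : ℤ) :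
    (∀ t : ℝ, f t ≤ t + n) ↔ (∀ x : ℝ, β (f (β.symm x)) ≤ x + n) := by
  have hβ' := isLift_symm hβ
  constructor
  · intro h x
    have h1 : f (β.symm x) ≤ β.symm x + n := h _
    have h2 := hβ.1.monotone h1
    rw [map_add_int hβ.2] at h2
    simpa using h2
  · intro h t
    have h1 := h (β t)
    rw [Homeomorph.symm_apply_apply] at h1
    have h2 := hβ'.1.monotone h1
    rw [map_add_int hβ'.2] at h2
    simpa using h2

/-- conjugation transfer for `∃` lower bounds -/
lemma exists_lower_transfer {f : ℝ → ℝ} {β : ℝ ≃ₜ ℝ} (hβ : IsLift β) (n : ℤ) :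
    (∃ t : ℝ, t + n ≤ f t) ↔ (∃ x : ℝ, x + n ≤ β (f (β.symm x))) := by
  have hβ' := isLift_symm hβ
  constructor
  · rintro ⟨t, ht⟩
    refine ⟨β t, ?_⟩
    rw [Homeomorph.symm_apply_apply]
    have h2 := hβ.1.monotone ht
    rw [map_add_int hβ.2] at h2
    exact h2
  · rintro ⟨x, hx⟩
    refine ⟨β.symm x, ?_⟩
    have h2 := hβ'.1.monotone hx
    rw [map_add_int hβ'.2, Homeomorph.symm_apply_apply] at h2
    exact h2

/-- conjugation transfer for `∃` upper bounds -/
lemma exists_upper_transfer {f : ℝ → ℝ} {β : ℝ ≃ₜ ℝ} (hβ : IsLift β) (n : ℤ) :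
    (∃ t : ℝ, f t ≤ t + n) ↔ (∃ x : ℝ, β (f (β.symm x)) ≤ x + n) := by
  have hβ' := isLift_symm hβ
  constructor
  · rintro ⟨t, ht⟩
    refine ⟨β t, ?_⟩
    rw [Homeomorph.symm_apply_apply]
    have h2 := hβ.1.monotone ht
    rw [map_add_int hβ.2] at h2
    exact h2
  · rintro ⟨x, hx⟩
    refine ⟨β.symm x, ?_⟩
    have h2 := hβ'.1.monotone hx
    rw [map_add_int hβ'.2, Homeomorph.symm_apply_apply] at h2
    exact h2

lemma floor_max (a b : ℝ) : ⌊max a b⌋ = max ⌊a⌋ ⌊b⌋ := by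
  rcases le_total a b with h | h
  · rw [max_eq_right h, max_eq_right (Int.floor_mono h)]
  · rw [max_eq_left h, max_eq_left (Int.floor_mono h)]

lemma ceil_max (a b : ℝ) : ⌈max a b⌉ = max ⌈a⌉ ⌈b⌉ := by
  rcases le_total a b with h | h
  · rw [max_eq_right h, max_eq_right (Int.ceil_mono h)]
  · rw [max_eq_left h, max_eq_left (Int.ceil_mono h)]

end LSharpAux

open LSharpAux in
/-- The length-sharp `ℓ^♯ = {⌊ℓ⌋, ⌈ℓ⌉}` is invariant under conjugation in
`Homeo~₊(S¹)`: the floor and the ceiling of the length are conjugacy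
invariants. -/
theorem length_sharp_conj_invariant (α β : ℝ ≃ₜ ℝ)
    (hα : IsLift α) (hβ : IsLift β) :
    ⌊lengthFn (⇑β ∘ ⇑α ∘ ⇑β.symm)⌋ = ⌊lengthFn ⇑α⌋ ∧
    ⌈lengthFn (⇑β ∘ ⇑α ∘ ⇑β.symm)⌉ = ⌈lengthFn ⇑α⌉ := by
  set γ : ℝ → ℝ := ⇑β ∘ ⇑α ∘ ⇑β.symm with hγ
  have hβ' := isLift_symm hβ
  have hαc : Continuous ⇑α := α.continuous
  have hγc : Continuous γ := β.continuous.comp (α.continuous.comp β.symm.continuous)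
  have hαp : ∀ x : ℝ, α (x + 1) = α x + 1 := hα.2
  have hγp : ∀ x : ℝ, γ (x + 1) = γ x + 1 := by
    intro x
    simp only [hγ, Function.comp_apply, hβ'.2, hα.2, hβ.2]
  have key_forall_low : ∀ n : ℤ, (∀ t : ℝ, t + n ≤ α t) ↔ (∀ x : ℝ, x + n ≤ γ x) :=
    fun n => forall_lower_transfer hβ n
  have key_forall_up : ∀ n : ℤ, (∀ t : ℝ, α t ≤ t + n) ↔ (∀ x : ℝ, γ x ≤ x + n) :=
    fun n => forall_upper_transfer hβ n
  have key_ex_low : ∀ n : ℤ, (∃ t : ℝ, t + n ≤ α t) ↔ (∃ x : ℝ, x + n ≤ γ x) :=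
    fun n => exists_lower_transfer hβ n
  have key_ex_up : ∀ n : ℤ, (∃ t : ℝ, α t ≤ t + n) ↔ (∃ x : ℝ, γ x ≤ x + n) :=
    fun n => exists_upper_transfer hβ n
  have hMfloor : ⌊sSup (S γ)⌋ = ⌊sSup (S ⇑α)⌋ := by
    apply le_antisymm
    · rw [Int.le_floor, le_sSup_iff' hαc hαp, key_ex_low, ← le_sSup_iff' hγc hγp]
      exact Int.floor_le _
    · rw [Int.le_floor, le_sSup_iff' hγc hγp, ← key_ex_low, ← le_sSup_iff' hαc hαp]
      exact Int.floor_le _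
  have hMceil : ⌈sSup (S γ)⌉ = ⌈sSup (S ⇑α)⌉ := by
    apply le_antisymm
    · rw [Int.ceil_le, sSup_le_iff' hγc hγp, ← key_forall_up, ← sSup_le_iff' hαc hαp]
      exact Int.le_ceil _
    · rw [Int.ceil_le, sSup_le_iff' hαc hαp, key_forall_up, ← sSup_le_iff' hγc hγp]
      exact Int.le_ceil _
  have hmfloor : ⌊sInf (S γ)⌋ = ⌊sInf (S ⇑α)⌋ := by
    apply le_antisymm
    · rw [Int.le_floor, le_sInf_iff' hαc hαp, key_forall_low, ← le_sInf_iff' hγc hγp]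
      exact Int.floor_le _
    · rw [Int.le_floor, le_sInf_iff' hγc hγp, ← key_forall_low, ← le_sInf_iff' hαc hαp]
      exact Int.floor_le _
  have hmceil : ⌈sInf (S γ)⌉ = ⌈sInf (S ⇑α)⌉ := by
    apply le_antisymm
    · rw [Int.ceil_le, sInf_le_iff' hγc hγp, ← key_ex_up, ← sInf_le_iff' hαc hαp]
      exact Int.le_ceil _
    · rw [Int.ceil_le, sInf_le_iff' hαc hαp, key_ex_up, ← sInf_le_iff' hγc hγp]
      exact Int.le_ceil _
  rw [lengthFn_eq hγc, lengthFn_eq hαc]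
  constructor
  · rw [floor_max, floor_max, hMfloor, Int.floor_neg, Int.floor_neg, hmceil]
  · rw [ceil_max, ceil_max, hMceil, Int.ceil_neg, Int.ceil_neg, hmfloor]
end
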